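/- arXiv:2312.11696 — 4 statements merged into one kernel-verified Lean document; each statement's English description precedes it below -/
import Mathlib

section
/- For every natural number n, the difference between consecutive whole numbers in base φ satisfies n+1‾ − n‾ = φ^(−|n|); that is, the difference equals 1 if the zeroth Zeckendorf digit of n is 0, and equals φ^(−1) if it is 1. -/
/-!
Adding one to a Zeckendorf representation is a single carry. With `a = 1 - |n|`, the digits of `n`
at `a, a + 2, …, a + 2(t - 1)` form a maximal run of ones (empty only if `a = 1`), and `n + 1` is
obtained by replacing this run with the single digit `a + 2t - 1`. Both `F` and `m ↦ φ ^ m`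
satisfy `f (m + 1) = f m + f (m - 1)`, so the run telescopes and the carry adds exactly
`f (a - 1)`. For `F` this is `F^{-1} = F^0 = 1`, so the new digit set represents `n + 1` (iterating
also gives existence of the representations) and, by uniqueness, it is the greedy one; for `φ` it
is `φ ^ (-|n|)`.
-/

open Finset

/-- `F m` denotes `F^m := F_{m+2}`, the Fibonacci numbers with shifted index,
so `F^{-2} = 0`, `F^{-1} = 1`, `F^0 = 1`, `F^1 = 2`, … (and `F^m = 0` for `m < -2`). -/
def F (m : ℤ) : ℕ := Nat.fib (m + 2).toNat

lemma F_pos (m : ℤ) (h : -2 < m) : 0 < F m := Nat.fib_pos.mpr (by omega)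

/-- The set of indices of the `1` digits in the (unique) Zeckendorf representation
`n = ∑_{j ∈ zeckSet n} F^j` (no two consecutive indices), computed greedily. -/
def zeckSet : ℕ → Finset ℕ
  | 0 => ∅
  | (n + 1) =>
      insert (Nat.findGreatest (fun i => F i ≤ n + 1) (n + 1))
        (zeckSet (n + 1 - F (Nat.findGreatest (fun i => F i ≤ n + 1) (n + 1))))
decreasing_by exact Nat.sub_lt (Nat.succ_pos n) (F_pos _ (by omega))

/-- The golden ratio `φ = (1 + √5)/2`. -/
noncomputable def phi : ℝ := (1 + Real.sqrt 5) / 2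

/-- `|n|`, the zeroth Zeckendorf digit of `n`. -/
def zd0 (n : ℕ) : ℕ := if 0 ∈ zeckSet n then 1 else 0

/-- `n‾ = ∑_j d_j φ^j`, the `n`-th whole number in base `φ`. -/
noncomputable def zbar (n : ℕ) : ℝ := ∑ j ∈ zeckSet n, phi ^ j

/-- `n ⊙ φ^k = ∑_j d_j F^{j+k}`, the Zeckendorf digit shift. -/
def zshift (n : ℕ) (k : ℤ) : ℕ := ∑ j ∈ zeckSet n, F (j + k)

theorem F_add_one {m : ℤ} (hm : -1 ≤ m) : F (m + 1) = F m + F (m - 1) := by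
  obtain ⟨k, rfl⟩ : ∃ k : ℕ, m = k - 1 := ⟨(m + 1).toNat, by omega⟩
  have h₀ : ((k : ℤ) - 1 - 1 + 2).toNat = k := by omega
  have h₁ : ((k : ℤ) - 1 + 2).toNat = k + 1 := by omega
  have h₂ : ((k : ℤ) - 1 + 1 + 2).toNat = k + 2 := by omega
  rw [F, F, F, h₀, h₁, h₂, Nat.fib_add_two, add_comm]

theorem F_mono : Monotone F := fun _ _ h => Nat.fib_mono (Int.toNat_le_toNat (by omega))

theorem lt_F_natCast (j : ℕ) : j < F j := by
  have h : ((j : ℤ) + 2).toNat = j + 2 := by omega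
  simpa [F, h] using (Nat.le_fib_add_one (j + 2))

def IsZeckendorf (S : Finset ℕ) : Prop := ∀ i ∈ S, i + 1 ∉ S

theorem IsZeckendorf.mono {S T : Finset ℕ} (hT : IsZeckendorf T) (hST : S ⊆ T) :
    IsZeckendorf S := fun i hi hi' => hT i (hST hi) (hST hi')

theorem IsZeckendorf.lt_sub_one_of_insert {s : Finset ℕ} {a : ℕ}
    (h : IsZeckendorf (insert a s)) (hs : ∀ x ∈ s, x < a) : ∀ x ∈ s, (x : ℤ) < a - 1 := by
  intro x hx
  have hne : x + 1 ≠ a := fun hxa => h x (mem_insert_of_mem hx) (hxa ▸ mem_insert_self a s)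
  have := hs x hx
  omega

theorem IsZeckendorf.sum_F_lt {S : Finset ℕ} (hS : IsZeckendorf S) {m : ℤ} (hm : -1 ≤ m)
    (h : ∀ j ∈ S, (j : ℤ) < m) : ∑ j ∈ S, F j < F m := by
  induction S using Finset.induction_on_max generalizing m with
  | empty => simpa using F_pos m (by omega)
  | insert a s hs ih =>
    have has : a ∉ s := fun ha => (hs a ha).false
    have hlt : ∑ j ∈ s, F j < F (a - 1) :=
      ih (hS.mono (subset_insert a s)) (by omega) (hS.lt_sub_one_of_insert hs)
    have hrec := F_add_one (m := a) (by omega)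
    have hmono := F_mono (show (a : ℤ) + 1 ≤ m from h a (mem_insert_self a s))
    rw [sum_insert has]
    omega

theorem zeckSet_sum_F {T : Finset ℕ} (hT : IsZeckendorf T) : zeckSet (∑ j ∈ T, F j) = T := by
  induction T using Finset.induction_on_max with
  | empty => simp [zeckSet]
  | insert a s hs ih =>
    have has : a ∉ s := fun ha => (hs a ha).false
    have hlt : ∑ j ∈ s, F j < F (a - 1) :=
      (hT.mono (subset_insert a s)).sum_F_lt (by omega) (hT.lt_sub_one_of_insert hs)
    have hrec := F_add_one (m := a) (by omega)
    rw [sum_insert has]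
    set n := F a + ∑ j ∈ s, F j with hn
    obtain ⟨k, hk⟩ : ∃ k, n = k + 1 := Nat.exists_eq_add_one.mpr (by have := F_pos a; omega)
    have hgreedy : Nat.findGreatest (fun i => F i ≤ k + 1) (k + 1) = a := by
      refine Nat.findGreatest_eq_iff.mpr ⟨?_, fun _ => by omega, fun i hai _ hi => ?_⟩
      · have := lt_F_natCast a; omega
      · have := F_mono (show (a : ℤ) + 1 ≤ i by omega)
        omega
    rw [hk, zeckSet, hgreedy, ← hk, show n - F a = ∑ j ∈ s, F j by omega,
      ih (hT.mono (subset_insert a s))]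

def run (a t : ℕ) : Finset ℕ := (range t).image (fun i => a + 2 * i)

theorem mem_run {a t j : ℕ} : j ∈ run a t ↔ ∃ i < t, a + 2 * i = j := by
  simp [run]

theorem sum_run_add {M : Type*} [AddCommMonoid M] (f : ℤ → M)
    (hf : ∀ m, -1 ≤ m → f (m + 1) = f m + f (m - 1)) (a t : ℕ) :
    ∑ j ∈ run a t, f j + f (a - 1) = f (a + 2 * t - 1) := by
  rw [run, sum_image (fun _ _ _ _ h => by omega)]
  push_cast
  induction t with
  | zero => simp
  | succ t ih =>
    have h := hf ((a + 2 * t : ℕ) : ℤ) (by omega)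
    push_cast at h
    rw [sum_range_succ, add_right_comm, ih,
      show (a : ℤ) + 2 * (t + 1 : ℕ) - 1 = a + 2 * t + 1 by push_cast; ring, h, add_comm]

section Carry

variable {S : Finset ℕ} {a t : ℕ}

theorem one_le_run_end (h0 : 0 ∈ S ↔ a = 0) (hend : a + 2 * t ∉ S) : 1 ≤ a + 2 * t := by
  by_contra h
  exact hend (by simpa [show a = 0 by omega, show t = 0 by omega] using h0)

theorem run_end_sub_one_notMem (hS : IsZeckendorf S) (ha : a ≤ 1) (h0 : 0 ∈ S ↔ a = 0)
    (hrun : ∀ i < t, a + 2 * i ∈ S) (hend : a + 2 * t ∉ S) : a + 2 * t - 1 ∉ S := by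
  have := one_le_run_end h0 hend
  rcases t with _ | t
  · rw [show a + 2 * 0 - 1 = 0 by omega]
    exact fun h => by have := h0.mp h; omega
  · simpa [show a + 2 * t + 1 = a + 2 * (t + 1) - 1 by omega] using hS _ (hrun t (by omega))

theorem IsZeckendorf.insert_sdiff_run (hS : IsZeckendorf S) (ha : a ≤ 1) (h0 : 0 ∈ S ↔ a = 0)
    (hend : a + 2 * t ∉ S) :
    IsZeckendorf (insert (a + 2 * t - 1) (S \ run a t)) := by
  have := one_le_run_end h0 hend
  intro i hi hi'
  simp only [mem_insert, mem_sdiff, mem_run, not_exists, not_and] at hi hi'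
  rcases hi with rfl | ⟨hiS, hiR⟩ <;> rcases hi' with hi' | ⟨hi'S, -⟩
  · omega
  · exact hend (by rwa [show a + 2 * t - 1 + 1 = a + 2 * t by omega] at hi'S)
  · exact hiR (t - 1) (by omega) (by omega)
  · exact hS i hiS hi'S

theorem sum_insert_sdiff_run {M : Type*} [AddCancelCommMonoid M] (f : ℤ → M)
    (hf : ∀ m, -1 ≤ m → f (m + 1) = f m + f (m - 1)) (hS : IsZeckendorf S) (ha : a ≤ 1)
    (h0 : 0 ∈ S ↔ a = 0) (hrun : ∀ i < t, a + 2 * i ∈ S) (hend : a + 2 * t ∉ S) :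
    ∑ j ∈ insert (a + 2 * t - 1) (S \ run a t), f j = ∑ j ∈ S, f j + f (a - 1) := by
  have hsub : run a t ⊆ S := fun j hj => by
    obtain ⟨i, hi, rfl⟩ := mem_run.mp hj
    exact hrun i hi
  have hnot : a + 2 * t - 1 ∉ S \ run a t :=
    fun h => run_end_sub_one_notMem hS ha h0 hrun hend (mem_sdiff.mp h).1
  have hrun_sum := sum_run_add f hf a t
  have hcast : ((a + 2 * t - 1 : ℕ) : ℤ) = a + 2 * t - 1 := by
    have := one_le_run_end h0 hend
    omega
  rw [sum_insert hnot, hcast, ← hrun_sum, ← sum_sdiff hsub]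
  abel

end Carry

theorem IsZeckendorf.exists_succ {S : Finset ℕ} (hS : IsZeckendorf S) :
    ∃ T, IsZeckendorf T ∧ ∀ {M : Type} [AddCancelCommMonoid M] (f : ℤ → M),
      (∀ m, -1 ≤ m → f (m + 1) = f m + f (m - 1)) →
      ∑ j ∈ T, f j = ∑ j ∈ S, f j + f (if 0 ∈ S then -1 else 0) := by
  set a := if 0 ∈ S then 0 else 1 with ha_def
  have ha : a ≤ 1 := by by_cases h : 0 ∈ S <;> simp [ha_def, h]
  have h0 : 0 ∈ S ↔ a = 0 := by by_cases h : 0 ∈ S <;> simp [ha_def, h]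
  have hex : ∃ t, a + 2 * t ∉ S := ⟨S.sup id + 1, fun h => by
    have := le_sup (f := id) h
    simp only [id] at this
    omega⟩
  refine ⟨_, hS.insert_sdiff_run ha h0 (Nat.find_spec hex), fun f hf => ?_⟩
  rw [sum_insert_sdiff_run f hf hS ha h0 (fun i hi => not_not.mp (Nat.find_min hex hi)) (Nat.find_spec hex)]
  by_cases h : 0 ∈ S <;> simp [ha_def, h]

theorem exists_isZeckendorf_sum_F_eq (n : ℕ) : ∃ S, IsZeckendorf S ∧ ∑ j ∈ S, F j = n := by
  induction n with
  | zero => exact ⟨∅, fun _ h => absurd h (notMem_empty _), sum_empty⟩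
  | succ n ih =>
    obtain ⟨S, hS, rfl⟩ := ih
    obtain ⟨T, hT, hsum⟩ := hS.exists_succ
    refine ⟨T, hT, ?_⟩
    rw [hsum F fun _ => F_add_one]
    split_ifs <;> rfl

theorem isZeckendorf_zeckSet (n : ℕ) : IsZeckendorf (zeckSet n) := by
  obtain ⟨S, hS, rfl⟩ := exists_isZeckendorf_sum_F_eq n
  rwa [zeckSet_sum_F hS]

theorem sum_F_zeckSet (n : ℕ) : ∑ j ∈ zeckSet n, F j = n := by
  obtain ⟨S, hS, rfl⟩ := exists_isZeckendorf_sum_F_eq n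
  rw [zeckSet_sum_F hS]

theorem phi_zpow_add_one (m : ℤ) : phi ^ (m + 1) = phi ^ m + phi ^ (m - 1) := by
  have h : phi ≠ 0 := Real.goldenRatio_ne_zero
  have hsq : phi ^ 2 = phi + 1 := Real.goldenRatio_sq
  calc phi ^ (m + 1) = phi ^ (m - 1) * phi ^ 2 := by
        rw [← zpow_natCast, ← zpow_add₀ h]; ring_nf
    _ = phi ^ (m - 1) * phi + phi ^ (m - 1) := by rw [hsq]; ring
    _ = phi ^ m + phi ^ (m - 1) := by rw [← zpow_add_one₀ h]; ring_nf

/-- The difference between consecutive whole numbers in base φ is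
`(n+1)‾ − n‾ = φ^(−|n|)`. -/
theorem statement0 (n : ℕ) :
    zbar (n + 1) - zbar n = phi ^ (-(zd0 n : ℤ)) := by
  obtain ⟨T, hT, hsum⟩ := (isZeckendorf_zeckSet n).exists_succ
  have hsucc : zeckSet (n + 1) = T := by
    rw [← zeckSet_sum_F hT, hsum F fun _ => F_add_one, sum_F_zeckSet]
    split_ifs <;> rfl
  have hzbar := hsum (phi ^ ·) fun m _ => phi_zpow_add_one m
  simp only [zpow_natCast] at hzbar
  rw [zbar, zbar, hsucc, hzbar, zd0]
  split_ifs <;> simp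
end

section
/- Let m ∈ ℕ₀ and let 0 ≤ a < F^m have Zeckendorf digits d_1 = d_0 = 0. Then the interval I_0(a;m) has length φ^(−m), the interval I_1(a;m) has length φ^(−m−1), and, when it exists (i.e., when a+3 ≤ F^m and also d_2 = 0), the interval I_2(a;m) has length φ^(−m). -/
/-!
Adding `F^j` to a number whose Zeckendorf digits all exceed `j` adds `φ^j` to its value in
base `φ`. Either `j + 1` is not a digit and `j` simply becomes one, or the carry
`F^j + F^{j+1} = F^{j+2}` is mirrored by `φ^j + φ^{j+1} = φ^{j+2}` and the argument repeats one
level higher; uniqueness of Zeckendorf representations identifies the digit set obtained this way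
with that of the sum. As `d_0 = d_1 = 0` (and `d_2 = 0`), adding `1 = F^0`, `2 = F^1`, `3 = F^2`
to `a` adds `1`, `φ`, `φ²` to `a‾`, so the three intervals have lengths `φ^{-m}`,
`(φ - 1) φ^{-m} = φ^{-m-1}` and `(φ² - φ) φ^{-m} = φ^{-m}`.
-/

open Finset

def NoTwoConsecutive (S : Finset ℕ) : Prop := ∀ i ∈ S, i + 1 ∉ S

lemma NoTwoConsecutive.mono {S T : Finset ℕ} (hS : NoTwoConsecutive S) (h : T ⊆ S) :
    NoTwoConsecutive T :=
  fun i hi hi1 => hS i (h hi) (h hi1)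

lemma NoTwoConsecutive.lt_pred_of_insert {s : Finset ℕ} {a : ℕ}
    (hS : NoTwoConsecutive (insert a s)) (has : ∀ x ∈ s, x < a) : ∀ i ∈ s, i < a - 1 :=
  fun i hi => by
    have : i + 1 ≠ a := fun h => hS i (mem_insert_of_mem hi) (h ▸ mem_insert_self a s)
    have := has i hi
    omega

lemma fib_pred_add_two (a : ℕ) : Nat.fib (a - 1 + 2) = Nat.fib (a + 1) := by
  rcases a with _ | a <;> rfl

lemma NoTwoConsecutive.sum_fib_lt {S : Finset ℕ} (hS : NoTwoConsecutive S) {g : ℕ}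
    (hg : ∀ i ∈ S, i < g) : ∑ i ∈ S, Nat.fib (i + 2) < Nat.fib (g + 2) := by
  induction S using Finset.induction_on_max generalizing g with
  | empty => simp
  | insert a s has ih =>
    have hs := fib_pred_add_two a ▸ ih (hS.mono (subset_insert a s)) (hS.lt_pred_of_insert has)
    have hfib : Nat.fib (a + 3) = Nat.fib (a + 1) + Nat.fib (a + 2) := Nat.fib_add_two
    have hmono : Nat.fib (a + 3) ≤ Nat.fib (g + 2) :=
      Nat.fib_mono (by have := hg a (mem_insert_self a s); omega)
    rw [sum_insert fun h => (has a h).false]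
    omega

lemma NoTwoConsecutive.insert {S : Finset ℕ} (hS : NoTwoConsecutive S) {a : ℕ}
    (hsucc : a + 1 ∉ S) (hpred : ∀ i ∈ S, i + 1 ≠ a) : NoTwoConsecutive (insert a S) := by
  intro i hi hi1
  rcases mem_insert.mp hi with rfl | hi <;> rcases mem_insert.mp hi1 with h | hi1
  · omega
  · exact hsucc hi1
  · exact hpred i hi h
  · exact hS i hi hi1

def topIndex (n : ℕ) : ℕ := Nat.findGreatest (fun i => F i ≤ n) n

lemma zeckSet_of_pos {n : ℕ} (hn : 0 < n) :
    zeckSet n = insert (topIndex n) (zeckSet (n - Nat.fib (topIndex n + 2))) := by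
  obtain ⟨n, rfl⟩ := Nat.exists_eq_add_one_of_ne_zero hn.ne'
  rw [zeckSet]
  rfl

lemma fib_topIndex_le {n : ℕ} (hn : 0 < n) : Nat.fib (topIndex n + 2) ≤ n :=
  Nat.findGreatest_spec (P := fun i : ℕ => F i ≤ n) (Nat.zero_le n) hn

lemma lt_fib_topIndex (n : ℕ) : n < Nat.fib (topIndex n + 3) := by
  by_cases h : topIndex n + 1 ≤ n
  · exact not_le.mp (Nat.findGreatest_is_greatest (P := fun i : ℕ => F i ≤ n)
      (Nat.lt_succ_self _) h)
  · have hn : topIndex n ≤ n := Nat.findGreatest_le n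
    have : topIndex n + 1 ≤ Nat.fib (topIndex n + 3) := Nat.fib_add_two_strictMono.id_le _
    omega

lemma topIndex_eq {n a : ℕ} (hle : Nat.fib (a + 2) ≤ n) (hlt : n < Nat.fib (a + 3)) :
    topIndex n = a := by
  have hn : 0 < n := lt_of_lt_of_le (Nat.fib_pos.mpr (by omega)) hle
  have h₁ := fib_topIndex_le hn
  have h₂ := lt_fib_topIndex n
  by_contra hne
  rcases Nat.lt_or_gt_of_ne hne with h | h
  · have : Nat.fib (topIndex n + 3) ≤ Nat.fib (a + 2) := Nat.fib_mono (by omega)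
    omega
  · have : Nat.fib (a + 3) ≤ Nat.fib (topIndex n + 2) := Nat.fib_mono (by omega)
    omega

lemma zeckSet_sum_fib {S : Finset ℕ} (hS : NoTwoConsecutive S) :
    zeckSet (∑ i ∈ S, Nat.fib (i + 2)) = S := by
  induction S using Finset.induction_on_max with
  | empty => simp [zeckSet]
  | insert a s has ih =>
    have ha : a ∉ s := fun h => (has a h).false
    have hs : NoTwoConsecutive s := hS.mono (subset_insert a s)
    rw [sum_insert ha]
    have hlt := fib_pred_add_two a ▸ hs.sum_fib_lt (hS.lt_pred_of_insert has)
    have htop : topIndex (Nat.fib (a + 2) + ∑ i ∈ s, Nat.fib (i + 2)) = a :=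
      have : Nat.fib (a + 3) = Nat.fib (a + 1) + Nat.fib (a + 2) := Nat.fib_add_two
      topIndex_eq (Nat.le_add_right _ _) (by omega)
    rw [zeckSet_of_pos (Nat.add_pos_left (Nat.fib_pos.mpr (by omega)) _), htop,
      Nat.add_sub_cancel_left, ih hs]

lemma noTwoConsecutive_zeckSet_and_sum_fib (n : ℕ) :
    NoTwoConsecutive (zeckSet n) ∧ ∑ i ∈ zeckSet n, Nat.fib (i + 2) = n := by
  induction n using Nat.strong_induction_on with
  | _ n ih =>
  rcases Nat.eq_zero_or_pos n with rfl | hn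
  · simp [zeckSet, NoTwoConsecutive]
  have hle := fib_topIndex_le hn
  have hlt := lt_fib_topIndex n
  rw [zeckSet_of_pos hn]
  generalize topIndex n = g at *
  have hfib : Nat.fib (g + 3) = Nat.fib (g + 1) + Nat.fib (g + 2) := Nat.fib_add_two
  obtain ⟨hadm, hsum⟩ := ih (n - Nat.fib (g + 2)) (Nat.sub_lt hn (Nat.fib_pos.mpr (by omega)))
  have hsmall : ∀ i ∈ zeckSet (n - Nat.fib (g + 2)), i + 1 < g := fun i hi => by
    have := hsum ▸ single_le_sum (fun j _ => Nat.zero_le (Nat.fib (j + 2))) hi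
    have := (Nat.fib_lt_fib (m := i + 2) (by omega) (n := g + 1)).mp (by omega)
    omega
  rw [sum_insert fun h => by have := hsmall g h; omega, hsum]
  exact ⟨hadm.insert (fun h => by have := hsmall _ h; omega) fun i hi => by
    have := hsmall i hi; omega, by omega⟩

lemma phi_ne_zero : phi ≠ 0 := Real.goldenRatio_ne_zero

lemma phi_sq : phi ^ 2 = phi + 1 := Real.goldenRatio_sq

lemma phi_inv : phi⁻¹ = phi - 1 := by
  show Real.goldenRatio⁻¹ = Real.goldenRatio - 1
  rw [Real.inv_goldenRatio, ← Real.one_sub_goldenConj]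
  ring

lemma phi_pow_add_two (j : ℕ) : phi ^ (j + 2) = phi ^ j + phi ^ (j + 1) := by
  rw [pow_add, phi_sq]
  ring

lemma exists_noTwoConsecutive_add_digit {S : Finset ℕ} (hS : NoTwoConsecutive S) {j : ℕ}
    (hj : ∀ i ∈ S, j < i) :
    ∃ T, NoTwoConsecutive T ∧
      ∑ i ∈ T, Nat.fib (i + 2) = ∑ i ∈ S, Nat.fib (i + 2) + Nat.fib (j + 2) ∧
      ∑ i ∈ T, phi ^ i = ∑ i ∈ S, phi ^ i + phi ^ j := by
  induction S using Finset.strongInduction generalizing j with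
  | H S ih =>
  by_cases hcarry : j + 1 ∈ S
  · set S' := S.erase (j + 1)
    have hj' : ∀ i ∈ S', j + 2 < i := fun i hi => by
      have := hj i (mem_of_mem_erase hi)
      have := ne_of_mem_erase hi
      have : i ≠ j + 2 := fun h => hS (j + 1) hcarry (h ▸ mem_of_mem_erase hi)
      omega
    obtain ⟨T, hT, hTfib, hTphi⟩ :=
      ih S' (erase_ssubset hcarry) (hS.mono (erase_subset _ _)) hj'
    refine ⟨T, hT, ?_, ?_⟩
    · rw [hTfib, ← sum_erase_add _ _ hcarry, Nat.fib_add_two (n := j + 2)]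
      ring
    · rw [hTphi, ← sum_erase_add _ _ hcarry, phi_pow_add_two]
      ring
  · have hjS : j ∉ S := fun h => (hj j h).false
    refine ⟨insert j S, hS.insert hcarry fun i hi => by have := hj i hi; omega, ?_, ?_⟩
    · rw [sum_insert hjS, add_comm]
    · rw [sum_insert hjS, add_comm]

lemma zbar_add_fib {n j : ℕ} (hj : ∀ i ∈ zeckSet n, j < i) :
    zbar (n + Nat.fib (j + 2)) = zbar n + phi ^ j := by
  obtain ⟨hadm, hsum⟩ := noTwoConsecutive_zeckSet_and_sum_fib n
  obtain ⟨T, hT, hTfib, hTphi⟩ := exists_noTwoConsecutive_add_digit hadm hj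
  have hzeck : zeckSet (n + Nat.fib (j + 2)) = T := by rw [← zeckSet_sum_fib hT, hTfib, hsum]
  rw [zbar, hzeck, hTphi, zbar]

theorem statement3_general (m a : ℕ)
    (h0 : 0 ∉ zeckSet a) (h1 : 1 ∉ zeckSet a) :
    (zbar (a + 1) / phi ^ m - zbar a / phi ^ m = phi ^ (-(m : ℤ))) ∧
    (zbar (a + 2) / phi ^ m - zbar (a + 1) / phi ^ m = phi ^ (-(m : ℤ) - 1)) ∧
    (a + 3 ≤ F m → 2 ∉ zeckSet a →
      zbar (a + 3) / phi ^ m - zbar (a + 2) / phi ^ m = phi ^ (-(m : ℤ))) := by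
  have digits_gt {j : ℕ} (h : ∀ i ≤ j, i ∉ zeckSet a) : ∀ i ∈ zeckSet a, j < i :=
    fun i hi => not_le.mp fun hij => h i hij hi
  have e1 : zbar (a + 1) = zbar a + 1 := by
    simpa [Nat.fib_add_two] using zbar_add_fib (j := 0) (digits_gt (by simpa using h0))
  have e2 : zbar (a + 2) = zbar a + phi := by
    simpa [Nat.fib_add_two] using
      zbar_add_fib (j := 1) (digits_gt fun i hi => by interval_cases i <;> assumption)
  have len (x y : ℝ) : y / phi ^ m - x / phi ^ m = (y - x) * phi ^ (-(m : ℤ)) := by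
    rw [zpow_neg, zpow_natCast]
    ring
  refine ⟨by rw [len, e1]; ring, by rw [len, e2, e1, zpow_sub_one₀ phi_ne_zero, phi_inv]; ring,
    fun _ h2 => ?_⟩
  have e3 : zbar (a + 3) = zbar a + phi ^ 2 := by
    simpa [Nat.fib_add_two] using
      zbar_add_fib (j := 2) (digits_gt fun i hi => by interval_cases i <;> assumption)
  rw [len, e3, e2, phi_sq]
  ring

/-- Lengths of the elementary intervals `I_i(a;m)` for `a < F^m`
with Zeckendorf digits `d_1 = d_0 = 0`: `I_0(a;m)` has length `φ^(−m)`, `I_1(a;m)` has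
length `φ^(−m−1)`, and (when it exists, i.e. `a+3 ≤ F^m` and `d_2 = 0`) `I_2(a;m)` has
length `φ^(−m)`. -/
theorem statement3 (m a : ℕ) (ha : a < F m)
    (h0 : 0 ∉ zeckSet a) (h1 : 1 ∉ zeckSet a) :
    (zbar (a + 1) / phi ^ m - zbar a / phi ^ m = phi ^ (-(m : ℤ))) ∧
    (zbar (a + 2) / phi ^ m - zbar (a + 1) / phi ^ m = phi ^ (-(m : ℤ) - 1)) ∧
    (a + 3 ≤ F m → 2 ∉ zeckSet a →
      zbar (a + 3) / phi ^ m - zbar (a + 2) / phi ^ m = phi ^ (-(m : ℤ))) :=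
  statement3_general m a h0 h1
end

section
/- Let m ≥ 0 and 0 ≤ k ≤ m+2 be integers. Then |F^(m−k)/F^m − φ^(−k)| = (1/φ^(m+2)) · (F^(k−2)/F^m), this quantity is strictly less than 1/F^m, and consequently F^(m−k)/F^m is the best rational approximation to φ^(−k) with denominator F^m: for every integer a, |a/F^m − φ^(−k)| ≥ |F^(m−k)/F^m − φ^(−k)|. -/
open Finset

open Real
open scoped goldenRatio

/-! The error `F_d / F_{d+k} - φ^{-k}` is, up to sign, `F_k / (φ^{d+k} F_{d+k})`: multiplied out,
this is the identity `φ^{d+k} F_d - φ^d F_{d+k} = ±F_k`, which follows from Binet's formula and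
`φψ = -1`. Since `2 F_n ≤ φ^n`, the error is at most half the spacing `1 / F_{d+k}` of the
fractions with that denominator, so no other such fraction is closer to `φ^{-k}`. -/

lemma F_eq_fib {m : ℤ} {n : ℕ} (h : m + 2 = n) : F m = Nat.fib n := by
  simp [F, h]

lemma goldenRatio_pow_add_mul_fib_sub (d j : ℕ) :
    φ ^ (d + j) * Nat.fib d - φ ^ d * Nat.fib (d + j) = (-1 : ℝ) ^ (d + 1) * Nat.fib j := by
  have hm : φ ^ d * ψ ^ d = (-1 : ℝ) ^ d := by rw [← mul_pow, goldenRatio_mul_goldenConj]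
  rw [coe_fib_eq, coe_fib_eq, coe_fib_eq, pow_add, pow_add]
  linear_combination ((ψ ^ j - φ ^ j) / √5) * hm

lemma abs_fib_div_fib_add_sub_inv_goldenRatio_pow (d j : ℕ) (h : 0 < d + j) :
    |Nat.fib d / Nat.fib (d + j) - (φ ^ j)⁻¹| = Nat.fib j / (φ ^ (d + j) * Nat.fib (d + j)) := by
  have hfib : (0 : ℝ) < Nat.fib (d + j) := by exact_mod_cast Nat.fib_pos.mpr h
  have hφ : 0 < φ ^ (d + j) := pow_pos goldenRatio_pos _
  have hsplit : (Nat.fib d / Nat.fib (d + j) - (φ ^ j)⁻¹ : ℝ) =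
      (φ ^ (d + j) * Nat.fib d - φ ^ d * Nat.fib (d + j)) / (φ ^ (d + j) * Nat.fib (d + j)) := by
    rw [pow_add φ d j]
    field_simp
  rw [hsplit, goldenRatio_pow_add_mul_fib_sub, abs_div, abs_mul, abs_of_pos (mul_pos hφ hfib)]
  simp

lemma two_mul_fib_le_goldenRatio_pow {n : ℕ} (hn : 2 ≤ n) : 2 * (Nat.fib n : ℝ) ≤ φ ^ n := by
  obtain ⟨n, rfl⟩ := Nat.exists_eq_add_of_le' hn
  have hφ : (3 / 2 : ℝ) ≤ φ := by
    have : (2 : ℝ) ≤ √5 := Real.le_sqrt_of_sq_le (by norm_num)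
    rw [goldenRatio]
    linarith
  have hfib : (Nat.fib (n + 2) : ℝ) ≤ 2 * Nat.fib (n + 1) := by
    exact_mod_cast (Nat.fib_add_two).trans_le (by linarith [Nat.fib_mono (Nat.le_succ n)])
  rw [← goldenRatio_mul_fib_succ_add_fib (n + 1)]
  nlinarith [(Nat.fib (n + 2)).cast_nonneg (α := ℝ)]

lemma abs_intCast_div_sub_le_of_le_half {p : ℤ} {q x : ℝ} (hq : 0 < q)
    (h : |p / q - x| ≤ 1 / (2 * q)) (a : ℤ) : |p / q - x| ≤ |a / q - x| := by
  rcases eq_or_ne a p with rfl | hap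
  · rfl
  have hgap : 1 / q ≤ |a / q - p / q| := by
    rw [div_sub_div_same, abs_div, abs_of_pos hq, ← Int.cast_sub]
    gcongr
    exact_mod_cast Int.one_le_abs (sub_ne_zero.mpr hap)
  have htri : |a / q - p / q| ≤ |a / q - x| + |p / q - x| := by
    simpa only [abs_sub_comm x] using abs_sub_le (a / q : ℝ) x (p / q)
  have hhalf : 1 / (2 * q) = 1 / q - 1 / (2 * q) := by field_simp; ring
  linarith

/-- For `0 ≤ k ≤ m+2`,
`|F^(m−k)/F^m − φ^(−k)| = (1/φ^(m+2))·(F^(k−2)/F^m) < 1/F^m`, and `F^(m−k)/F^m` is the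
best rational approximation to `φ^(−k)` with denominator `F^m`. -/
theorem statement6 (m k : ℕ) (hk : k ≤ m + 2) :
    |(F ((m : ℤ) - k) : ℝ) / (F (m : ℤ) : ℝ) - phi ^ (-(k : ℤ))| =
        1 / phi ^ ((m : ℤ) + 2) * ((F ((k : ℤ) - 2) : ℝ) / (F (m : ℤ) : ℝ)) ∧
    |(F ((m : ℤ) - k) : ℝ) / (F (m : ℤ) : ℝ) - phi ^ (-(k : ℤ))| < 1 / (F (m : ℤ) : ℝ) ∧
    ∀ a : ℤ,
      |(F ((m : ℤ) - k) : ℝ) / (F (m : ℤ) : ℝ) - phi ^ (-(k : ℤ))| ≤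
        |(a : ℝ) / (F (m : ℤ) : ℝ) - phi ^ (-(k : ℤ))| := by
  obtain ⟨d, hd⟩ : ∃ d, d + k = m + 2 := ⟨m + 2 - k, by omega⟩
  have hpow : phi ^ ((m : ℤ) + 2) = φ ^ (m + 2) := by exact_mod_cast zpow_natCast φ (m + 2)
  rw [F_eq_fib (n := d) (by omega), F_eq_fib (n := m + 2) (by omega), F_eq_fib (n := k) (by omega),
    hpow, show phi = φ from rfl, zpow_neg, zpow_natCast]
  have hq : (0 : ℝ) < Nat.fib (m + 2) := by exact_mod_cast Nat.fib_pos.mpr (by omega)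
  have herr := abs_fib_div_fib_add_sub_inv_goldenRatio_pow d k (by omega)
  rw [hd] at herr
  have hhalf : Nat.fib k / (φ ^ (m + 2) * Nat.fib (m + 2)) ≤ 1 / (2 * (Nat.fib (m + 2) : ℝ)) := by
    rw [div_le_div_iff₀ (by positivity) (by positivity)]
    have hφ := two_mul_fib_le_goldenRatio_pow (n := m + 2) (by omega)
    have hmono : (Nat.fib k : ℝ) ≤ Nat.fib (m + 2) := by exact_mod_cast Nat.fib_mono hk
    nlinarith
  refine ⟨by rw [herr, div_mul_div_comm, one_mul], ?_, ?_⟩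
  · calc _ ≤ 1 / (2 * (Nat.fib (m + 2) : ℝ)) := herr.trans_le hhalf
      _ < 1 / (Nat.fib (m + 2) : ℝ) := by gcongr; linarith
  · have hbest := abs_intCast_div_sub_le_of_le_half (p := Nat.fib d) (x := (φ ^ k)⁻¹) hq
    rw [Int.cast_natCast] at hbest
    exact hbest (herr.trans_le hhalf)
end

section
/- Let s ≥ 1 and m ≥ 0 be integers and let (m_1,...,m_s) ∈ ℕ₀^s satisfy m_1 + ... + m_s + #{j : m_j > 0} ≤ m + 2. Then the sum over all tuples (a_1,...,a_s) with 0 ≤ a_j < F^{m_j} of F^(m − Σ_j (m_j + |a_j|)) equals F^m; that is, F^m = Σ_{I ∈ 𝒫_𝐦} F^(m−|I|) where the sum runs over all elementary intervals I of the (m_1,...,m_s)-partition. -/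
open Finset

/-! The one-dimensional case is a Fibonacci recursion in `m`: the integers below `F^{m+2}` are
those below `F^{m+1}` together with `F^{m+1} + i` for `i < F^m`, and the latter have leading
Zeckendorf digit `m + 1` and the same zeroth digit as `i`. So the sum for `m + 2` at level `M` is
the sum for `m + 1` at level `M - 1` plus the sum for `m` at level `M - 2`, i.e.
`F^{M-1} + F^{M-2} = F^M`. The `s`-dimensional sum is evaluated one coordinate at a time: since
`|a| ≤ [m > 0]` for `a < F^m`, lowering the level by `m_1 + |a_1|` keeps the hypothesis valid for
the remaining coordinates. -/

lemma F_natCast (k : ℕ) : F k = Nat.fib (k + 2) := rfl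

lemma F_eq_add {M : ℤ} (hM : 0 ≤ M) : F M = F (M - 1) + F (M - 2) := by
  unfold F
  rw [show (M + 2).toNat = (M - 2 + 2).toNat + 2 by omega,
    show (M - 1 + 2).toNat = (M - 2 + 2).toNat + 1 by omega, Nat.fib_add_two, add_comm]

lemma F_natCast_add_two (k : ℕ) : F (k + 2 : ℕ) = F (k + 1 : ℕ) + F k := by
  simp only [F_natCast, Nat.fib_add_two]; ring

lemma F_mono_s8 {a b : ℕ} (h : a ≤ b) : F a ≤ F b :=
  Nat.fib_mono (by omega)

lemma lt_F (k : ℕ) : k < F k := by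
  have := Nat.le_fib_add_one (k + 2)
  rw [F_natCast]; omega

lemma zeckSet_eq_insert {k n : ℕ} (hk : F k ≤ n) (hn : n < F (k + 1 : ℕ)) :
    zeckSet n = insert k (zeckSet (n - F k)) := by
  obtain ⟨n, rfl⟩ : ∃ n', n = n' + 1 := ⟨n - 1, by have := F_pos k (by omega); omega⟩
  have greedy : Nat.findGreatest (fun i => F i ≤ n + 1) (n + 1) = k := by
    refine Nat.findGreatest_eq_iff.mpr ⟨by have := lt_F k; omega, fun _ => hk, fun j hj _ hj' => ?_⟩
    have : F (k + 1 : ℕ) ≤ F j := F_mono_s8 hj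
    exact absurd hj' (by simp only [not_le]; omega)
  rw [zeckSet, greedy]

lemma zd0_zero : zd0 0 = 0 := by
  simp [zd0, zeckSet]

lemma zd0_one : zd0 1 = 1 := by
  have : zeckSet 1 = insert 0 (zeckSet (1 - F (0 : ℕ))) := zeckSet_eq_insert (by decide) (by decide)
  simp [zd0, this]

lemma zd0_le_one (n : ℕ) : zd0 n ≤ 1 := by
  unfold zd0; split <;> omega

lemma zd0_le_of_lt_F {k n : ℕ} (hn : n < F k) : zd0 n ≤ if 0 < k then 1 else 0 := by
  rcases Nat.eq_zero_or_pos k with rfl | hk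
  · obtain rfl : n = 0 := by rw [F_natCast] at hn; simpa using hn
    exact zd0_zero.le
  · simpa [hk] using zd0_le_one n

lemma zd0_F_add {k i : ℕ} (hi : i < F k) : zd0 (F (k + 1 : ℕ) + i) = zd0 i := by
  have := F_natCast_add_two k
  have top : zeckSet (F (k + 1 : ℕ) + i) = insert (k + 1) (zeckSet i) := by
    have := zeckSet_eq_insert (k := k + 1) (n := F (k + 1 : ℕ) + i) (by omega)
      (by rw [show k + 1 + 1 = k + 2 from rfl]; omega)
    rwa [Nat.add_sub_cancel_left] at this
  rw [zd0, zd0, top]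
  simp

theorem sum_range_F_sub_zd0 :
    ∀ (m : ℕ) (M : ℤ), ((m + if 0 < m then 1 else 0 : ℕ) : ℤ) ≤ M + 2 →
      ∑ a ∈ range (F m), F (M - m - zd0 a) = F M
  | 0, M, _ => by
    rw [show F (0 : ℕ) = 1 from rfl]
    simp [zd0_zero]
  | 1, M, h => by
    rw [show F (1 : ℕ) = 2 from rfl, F_eq_add (M := M) (by norm_num at h; omega)]
    simp [sum_range_succ, zd0_zero, zd0_one, sub_sub]
  | m + 2, M, h => by
    have h' : (m : ℤ) + 3 ≤ M + 2 := by simpa [add_assoc] using h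
    have low := sum_range_F_sub_zd0 (m + 1) (M - 1) (by push_cast; omega)
    have high := sum_range_F_sub_zd0 m (M - 2) (by push_cast; split <;> omega)
    rw [F_natCast_add_two, sum_range_add, F_eq_add (M := M) (by omega), ← low, ← high]
    congr 1
    · refine sum_congr rfl fun a _ => ?_
      congr 1; push_cast; ring
    · refine sum_congr rfl fun a ha => ?_
      rw [zd0_F_add (mem_range.mp ha)]
      congr 1; push_cast; ring

lemma sum_piFinset_fin_succ {α β : Type*} [AddCommMonoid β] {n : ℕ} (t : Fin (n + 1) → Finset α)
    (f : (Fin (n + 1) → α) → β) :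
    ∑ a ∈ Fintype.piFinset t, f a =
      ∑ x ∈ t 0, ∑ b ∈ Fintype.piFinset (Fin.tail t), f (Fin.cons x b) := by
  have split := filter_piFinset_eq_map_consEquiv t (fun _ => True)
  simp only [filter_true] at split
  rw [split, sum_map, sum_product]
  rfl

theorem sum_piFinset_F_sub_sum_zd0 (s : ℕ) (mv : Fin s → ℕ) (M : ℤ)
    (h : ((∑ j, (mv j + if 0 < mv j then 1 else 0) : ℕ) : ℤ) ≤ M + 2) :
    ∑ a ∈ Fintype.piFinset (fun j => range (F (mv j))), F (M - ∑ j, ((mv j : ℤ) + zd0 (a j))) =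
      F M := by
  induction s generalizing M with
  | zero => simp [Fintype.piFinset_of_isEmpty]
  | succ s ih =>
    rw [Fin.sum_univ_succ, Nat.cast_add] at h
    rw [sum_piFinset_fin_succ]
    calc _ = ∑ x ∈ range (F (mv 0)), F (M - mv 0 - zd0 x) := by
          refine sum_congr rfl fun x hx => ?_
          have hx := zd0_le_of_lt_F (mem_range.mp hx)
          rw [← ih (fun j => mv j.succ) (M - mv 0 - zd0 x) (by push_cast at h ⊢; split at hx <;> omega)]
          refine sum_congr rfl fun b _ => ?_
          rw [Fin.sum_univ_succ]
          simp only [Fin.cons_zero, Fin.cons_succ]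
          congr 1; ring
      _ = F M := sum_range_F_sub_zd0 _ _ (by omega)

theorem statement8_general (s : ℕ) (m : ℕ) (mv : Fin s → ℕ)
    (h : (∑ j, mv j) + (Finset.univ.filter fun j => 0 < mv j).card ≤ m + 2) :
    (∑ a ∈ Fintype.piFinset (fun j : Fin s => Finset.range (F (mv j))),
        F ((m : ℤ) - ∑ j, ((mv j : ℤ) + (zd0 (a j) : ℤ)))) = F m := by
  refine sum_piFinset_F_sub_sum_zd0 s mv m ?_
  rw [sum_add_distrib, ← card_filter]
  exact_mod_cast h

/-- If `m₁ + ⋯ + m_s + #{j : m_j > 0} ≤ m + 2`, then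
`F^m = ∑_{I ∈ 𝒫_𝐦} F^(m−|I|)`, the sum running over all elementary intervals of the
`(m₁,…,m_s)`-partition, i.e. over all tuples `(a₁,…,a_s)` with `0 ≤ a_j < F^{m_j}`,
with `|I| = ∑_j (m_j + |a_j|)`. -/
theorem statement8 (s : ℕ) (hs : 1 ≤ s) (m : ℕ) (mv : Fin s → ℕ)
    (h : (∑ j, mv j) + (Finset.univ.filter fun j => 0 < mv j).card ≤ m + 2) :
    (∑ a ∈ Fintype.piFinset (fun j : Fin s => Finset.range (F (mv j))),
        F ((m : ℤ) - ∑ j, ((mv j : ℤ) + (zd0 (a j) : ℤ)))) = F m :=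
  statement8_general s m mv h
end
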